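/- arXiv:2605.15953 — 6 statements merged into one kernel-verified Lean document; each statement's English description precedes it below -/
import Mathlib

section
/- Let Φ and P be linear maps on M_n(ℂ) such that Φ ∘ P = P ∘ Φ = P, and such that Φ and P map positive definite states to positive definite states. Suppose there is a constant c ∈ [0,1] such that for every positive definite state ρ, D(Φ(ρ)‖Φ(P(ρ))) ≤ c · D(ρ‖P(ρ)). Then for every positive definite state ρ and every natural number t, D(Φ^[t](ρ)‖P(ρ)) ≤ c^t · D(ρ‖P(ρ)), where Φ^[t] denotes the t-fold composition of Φ with itself. -/
/-!
Because `P ∘ Φ = P`, the reference state `P ρ` is the same for every point `Φ^[t] ρ` of the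
orbit, and because `Φ ∘ P = P`, the one-step hypothesis `D(Φ σ ‖ Φ (P σ)) ≤ c · D(σ ‖ P σ)`
says that `V σ := D(σ ‖ P σ)` decreases by the factor `c` along each step of the orbit, which
stays among the positive definite states. Iterating gives the factor `c ^ t`.
-/

open scoped ComplexOrder

/-- The matrix logarithm of a (positive definite) matrix, via the continuous
functional calculus. -/
noncomputable def matLog {n : Type*} [Fintype n] [DecidableEq n]
    (ρ : Matrix n n ℂ) : Matrix n n ℂ :=
  cfc Real.log ρ

/-- The quantum relative entropy of (positive definite) matrices. -/
noncomputable def relEntropy {n : Type*} [Fintype n] [DecidableEq n]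
    (ρ σ : Matrix n n ℂ) : ℝ :=
  (Matrix.trace (ρ * (matLog ρ - matLog σ))).re

theorem le_pow_mul_of_mapsTo_of_le_mul {α R : Type*} [Semiring R] [PartialOrder R]
    [IsOrderedRing R] {f : α → α} {s : Set α} (hf : Set.MapsTo f s s) {V : α → R} {c : R}
    (hc : 0 ≤ c) (hV : ∀ x ∈ s, V (f x) ≤ c * V x) {x : α} (hx : x ∈ s) (t : ℕ) :
    V (f^[t] x) ≤ c ^ t * V x := by
  induction t with
  | zero => simp
  | succ t ih =>
    calc V (f^[t + 1] x) = V (f (f^[t] x)) := by rw [Function.iterate_succ_apply']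
      _ ≤ c * V (f^[t] x) := hV _ (hf.iterate t hx)
      _ ≤ c * (c ^ t * V x) := mul_le_mul_of_nonneg_left ih hc
      _ = c ^ (t + 1) * V x := by rw [pow_succ', mul_assoc]

theorem Function.apply_iterate_eq_of_comp_eq {α β : Type*} {f : α → α} {g : α → β}
    (h : g ∘ f = g) (t : ℕ) (x : α) : g (f^[t] x) = g x := by
  have hsemi : Function.Semiconj g f id := congrFun h
  simpa using hsemi.iterate_right t x

theorem relEntropy_contraction_iterate_general
    {n : Type*} [Fintype n] [DecidableEq n]
    (Φ P : Module.End ℂ (Matrix n n ℂ))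
    (hΦP : Φ * P = P) (hPΦ : P * Φ = P)
    (hΦstate : ∀ ρ : Matrix n n ℂ, ρ.PosDef → ρ.trace = 1 →
      (Φ ρ).PosDef ∧ (Φ ρ).trace = 1)
    (c : ℝ) (hc0 : 0 ≤ c)
    (hcontr : ∀ ρ : Matrix n n ℂ, ρ.PosDef → ρ.trace = 1 →
      relEntropy (Φ ρ) (Φ (P ρ)) ≤ c * relEntropy ρ (P ρ)) :
    ∀ (ρ : Matrix n n ℂ), ρ.PosDef → ρ.trace = 1 → ∀ t : ℕ,
      relEntropy ((Φ ^ t) ρ) (P ρ) ≤ c ^ t * relEntropy ρ (P ρ) := by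
  intro ρ hρ hρtr t
  let states : Set (Matrix n n ℂ) := {σ | σ.PosDef ∧ σ.trace = 1}
  have hmaps : Set.MapsTo Φ states states := fun σ hσ => hΦstate σ hσ.1 hσ.2
  have hPinv : ∀ σ, P (Φ σ) = P σ := LinearMap.congr_fun hPΦ
  have hstep : ∀ σ ∈ states, relEntropy (Φ σ) (P (Φ σ)) ≤ c * relEntropy σ (P σ) := by
    intro σ hσ
    have hfix : Φ (P σ) = P σ := LinearMap.congr_fun hΦP σ
    simpa only [hPinv, hfix] using hcontr σ hσ.1 hσ.2
  have hiter := le_pow_mul_of_mapsTo_of_le_mul hmaps (V := fun σ => relEntropy σ (P σ)) hc0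
    hstep (x := ρ) ⟨hρ, hρtr⟩ t
  rwa [Function.apply_iterate_eq_of_comp_eq (funext hPinv), ← Module.End.coe_pow] at hiter

/-- Entropy contraction iterates: if `Φ ∘ P = P ∘ Φ = P`, both maps preserve positive
definite states, and one-step entropy contraction with constant `c ∈ [0,1]` holds, then
`D(Φ^[t](ρ) ‖ P(ρ)) ≤ c^t · D(ρ ‖ P(ρ))` for all positive definite states `ρ` and all `t`. -/
theorem relEntropy_contraction_iterate
    {n : Type*} [Fintype n] [DecidableEq n]
    (Φ P : Module.End ℂ (Matrix n n ℂ))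
    (hΦP : Φ * P = P) (hPΦ : P * Φ = P)
    (hΦstate : ∀ ρ : Matrix n n ℂ, ρ.PosDef → ρ.trace = 1 →
      (Φ ρ).PosDef ∧ (Φ ρ).trace = 1)
    (hPstate : ∀ ρ : Matrix n n ℂ, ρ.PosDef → ρ.trace = 1 →
      (P ρ).PosDef ∧ (P ρ).trace = 1)
    (c : ℝ) (hc0 : 0 ≤ c) (hc1 : c ≤ 1)
    (hcontr : ∀ ρ : Matrix n n ℂ, ρ.PosDef → ρ.trace = 1 →
      relEntropy (Φ ρ) (Φ (P ρ)) ≤ c * relEntropy ρ (P ρ)) :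
    ∀ (ρ : Matrix n n ℂ), ρ.PosDef → ρ.trace = 1 → ∀ t : ℕ,
      relEntropy ((Φ ^ t) ρ) (P ρ) ≤ c ^ t * relEntropy ρ (P ρ) :=
  relEntropy_contraction_iterate_general Φ P hΦP hPΦ hΦstate c hc0 hcontr
end

section
/- Let A ∈ M_m(ℂ) and B ∈ M_n(ℂ) be positive definite matrices. Then the matrix logarithm of their Kronecker product satisfies log(A ⊗ₖ B) = (log A) ⊗ₖ 1ₙ + 1ₘ ⊗ₖ (log B), where 1ₘ and 1ₙ denote identity matrices. -/
open scoped ComplexOrder Kronecker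

open NormedSpace

section aux
set_option linter.unusedSectionVars false
variable {m n : Type*} [Fintype m] [DecidableEq m] [Fintype n] [DecidableEq n]

lemma kron_conjTranspose (X : Matrix m m ℂ) (Y : Matrix n n ℂ) :
    (X ⊗ₖ Y).conjTranspose = X.conjTranspose ⊗ₖ Y.conjTranspose := by
  ext ⟨i, j⟩ ⟨k, l⟩
  simp [Matrix.conjTranspose_apply, Matrix.kroneckerMap_apply, mul_comm]

/-- `X ↦ X ⊗ₖ 1` as a ring hom. -/
def kronOneRingHom : Matrix m m ℂ →+* Matrix (m × n) (m × n) ℂ where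
  toFun X := X ⊗ₖ (1 : Matrix n n ℂ)
  map_one' := Matrix.one_kronecker_one
  map_mul' X Y := by rw [← Matrix.mul_kronecker_mul, one_mul]
  map_zero' := Matrix.zero_kronecker _
  map_add' X Y := Matrix.add_kronecker X Y _

/-- `Y ↦ 1 ⊗ₖ Y` as a ring hom. -/
def oneKronRingHom : Matrix n n ℂ →+* Matrix (m × n) (m × n) ℂ where
  toFun Y := (1 : Matrix m m ℂ) ⊗ₖ Y
  map_one' := Matrix.one_kronecker_one
  map_mul' X Y := by rw [← Matrix.mul_kronecker_mul, one_mul]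
  map_zero' := Matrix.kronecker_zero _
  map_add' X Y := Matrix.kronecker_add _ X Y

lemma continuous_kronOne : Continuous (fun X : Matrix m m ℂ => X ⊗ₖ (1 : Matrix n n ℂ)) := by
  refine continuous_pi fun i => continuous_pi fun j => ?_
  simp only [Matrix.kroneckerMap_apply]
  fun_prop

lemma continuous_oneKron : Continuous (fun Y : Matrix n n ℂ => (1 : Matrix m m ℂ) ⊗ₖ Y) := by
  refine continuous_pi fun i => continuous_pi fun j => ?_
  simp only [Matrix.kroneckerMap_apply]
  fun_prop

lemma exp_kron_one (X : Matrix m m ℂ) :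
    exp (X ⊗ₖ (1 : Matrix n n ℂ)) = (exp X) ⊗ₖ (1 : Matrix n n ℂ) := by
  letI : NormedRing (Matrix (m × n) (m × n) ℂ) := Matrix.linftyOpNormedRing
  letI : NormedAlgebra ℝ (Matrix (m × n) (m × n) ℂ) := Matrix.linftyOpNormedAlgebra
  letI : NormedRing (Matrix m m ℂ) := Matrix.linftyOpNormedRing
  letI : NormedAlgebra ℝ (Matrix m m ℂ) := Matrix.linftyOpNormedAlgebra
  letI : NormedAlgebra ℚ (Matrix m m ℂ) := Matrix.linftyOpNormedAlgebra
  letI : NormedAlgebra ℚ (Matrix (m × n) (m × n) ℂ) := Matrix.linftyOpNormedAlgebra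
  exact (map_exp (kronOneRingHom (m := m) (n := n)) continuous_kronOne X).symm

lemma exp_one_kron (Y : Matrix n n ℂ) :
    exp ((1 : Matrix m m ℂ) ⊗ₖ Y) = (1 : Matrix m m ℂ) ⊗ₖ (exp Y) := by
  letI : NormedRing (Matrix (m × n) (m × n) ℂ) := Matrix.linftyOpNormedRing
  letI : NormedAlgebra ℝ (Matrix (m × n) (m × n) ℂ) := Matrix.linftyOpNormedAlgebra
  letI : NormedRing (Matrix n n ℂ) := Matrix.linftyOpNormedRing
  letI : NormedAlgebra ℝ (Matrix n n ℂ) := Matrix.linftyOpNormedAlgebra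
  letI : NormedAlgebra ℚ (Matrix n n ℂ) := Matrix.linftyOpNormedAlgebra
  letI : NormedAlgebra ℚ (Matrix (m × n) (m × n) ℂ) := Matrix.linftyOpNormedAlgebra
  exact (map_exp (oneKronRingHom (m := m) (n := n)) continuous_oneKron Y).symm

lemma posDef_spectrum_pos {A : Matrix m m ℂ} (hA : A.PosDef) :
    ∀ x ∈ spectrum ℝ A, 0 < x := by
  intro x hx
  rw [hA.isHermitian.spectrum_real_eq_range_eigenvalues] at hx
  obtain ⟨i, rfl⟩ := hx
  exact hA.eigenvalues_pos i

end aux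

/-- For positive definite matrices `A`, `B`,
`log (A ⊗ₖ B) = (log A) ⊗ₖ 1 + 1 ⊗ₖ (log B)`. -/
theorem matLog_kronecker
    {m n : Type*} [Fintype m] [DecidableEq m] [Fintype n] [DecidableEq n]
    (A : Matrix m m ℂ) (B : Matrix n n ℂ) (hA : A.PosDef) (hB : B.PosDef) :
    matLog (A ⊗ₖ B) =
      (matLog A) ⊗ₖ (1 : Matrix n n ℂ) + (1 : Matrix m m ℂ) ⊗ₖ (matLog B) := by
  have hla : IsSelfAdjoint (matLog A) := cfc_predicate Real.log A
  have hlb : IsSelfAdjoint (matLog B) := cfc_predicate Real.log B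
  have hH : IsSelfAdjoint
      ((matLog A) ⊗ₖ (1 : Matrix n n ℂ) + (1 : Matrix m m ℂ) ⊗ₖ (matLog B)) := by
    have h1 : (matLog A).conjTranspose = matLog A := hla.star_eq
    have h2 : (matLog B).conjTranspose = matLog B := hlb.star_eq
    simp only [IsSelfAdjoint, Matrix.star_eq_conjTranspose, Matrix.conjTranspose_add,
      kron_conjTranspose, Matrix.conjTranspose_one, h1, h2]
  have hcomm : Commute ((matLog A) ⊗ₖ (1 : Matrix n n ℂ)) ((1 : Matrix m m ℂ) ⊗ₖ (matLog B)) := by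
    unfold Commute SemiconjBy
    rw [← Matrix.mul_kronecker_mul, ← Matrix.mul_kronecker_mul, one_mul, mul_one, one_mul, mul_one]
  have heA : exp (matLog A) = A := by
    open scoped MatrixOrder Matrix.Norms.L2Operator in exact CFC.exp_log A hA.isStrictlyPositive
  have heB : exp (matLog B) = B := by
    open scoped MatrixOrder Matrix.Norms.L2Operator in exact CFC.exp_log B hB.isStrictlyPositive
  have hexp : exp ((matLog A) ⊗ₖ (1 : Matrix n n ℂ) + (1 : Matrix m m ℂ) ⊗ₖ (matLog B))
      = A ⊗ₖ B := by
    rw [Matrix.exp_add_of_commute _ _ hcomm, exp_kron_one, exp_one_kron, heA, heB,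
      ← Matrix.mul_kronecker_mul, mul_one, one_mul]
  open scoped Matrix.Norms.L2Operator in
  calc matLog (A ⊗ₖ B)
      = CFC.log (exp ((matLog A) ⊗ₖ (1 : Matrix n n ℂ) + (1 : Matrix m m ℂ) ⊗ₖ (matLog B))) := by
        rw [hexp]; rfl
    _ = _ := CFC.log_exp _ hH
end

section
/- Let K be a finite type and, for each k ∈ K, let d k and e k be finite nonempty types. Let ι := Σ k, (d k × e k). For i = 1, 2, let σ_i := blockDiagonal' (fun k => ς_{i,k} ⊗ₖ ω k) ∈ Matrix ι ι ℂ, where each ς_{i,k} ∈ Matrix (d k) (d k) ℂ is positive definite and each ω k ∈ Matrix (e k) (e k) ℂ is a positive definite state (the same ω k for i = 1 and i = 2). Let X ∈ Matrix ι ι ℂ be such that for every k, the partial trace over e k of the k-th diagonal block of X vanishes: for all a, a' ∈ d k, Σ_{b ∈ e k} X_{⟨k,(a,b)⟩,⟨k,(a',b)⟩} = 0. Then tr(X * (log σ₁ − log σ₂)) = 0. -/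
open scoped ComplexOrder Kronecker

open Matrix

section Workhorse
variable {m : Type*} [Fintype m] [DecidableEq m]

lemma star_diag_real (l : m → ℝ) :
    star (diagonal (fun i => (l i : ℂ))) = diagonal fun i => (l i : ℂ) := by
  ext i j
  rw [Matrix.star_apply]
  rcases eq_or_ne i j with rfl | h
  · simp
  · simp [Matrix.diagonal_apply_ne _ h, Matrix.diagonal_apply_ne _ (Ne.symm h)]

lemma cfc_unitary_conj_diag (U : unitary (Matrix m m ℂ)) (l : m → ℝ) (f : ℝ → ℝ) :
    cfc f ((U : Matrix m m ℂ) * diagonal (fun i => (l i : ℂ)) * star (U : Matrix m m ℂ))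
      = (U : Matrix m m ℂ) * diagonal (fun i => (f (l i) : ℂ)) * star (U : Matrix m m ℂ) := by
  rcases isEmpty_or_nonempty m with h | h
  · exact Subsingleton.elim _ _
  set A := (U : Matrix m m ℂ) * diagonal (fun i => (l i : ℂ)) * star (U : Matrix m m ℂ) with hAdef
  have hA : _root_.IsSelfAdjoint A := by
    rw [hAdef]
    show star _ = _
    rw [StarMul.star_mul, StarMul.star_mul, star_star, star_diag_real, mul_assoc]
  have h_spec : spectrum ℝ A = Set.range l := by
    ext x
    rw [hAdef, Unitary.spectrum_star_right_conjugate, ← spectrum.algebraMap_mem_iff ℂ,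
      spectrum_diagonal]
    simp [Complex.ext_iff]
  have hmem : ∀ i, l i ∈ spectrum ℝ A := fun i => h_spec ▸ ⟨i, rfl⟩
  let φ : C(spectrum ℝ A, ℝ) →⋆ₐ[ℝ] Matrix m m ℂ :=
  { toFun := fun g => (U : Matrix m m ℂ) *
      diagonal (Complex.ofReal ∘ g ∘ (fun i ↦ ⟨l i, hmem i⟩)) * star (U : Matrix m m ℂ)
    map_one' := by simp [Pi.one_def (M := fun _ : m ↦ ℂ)]
    map_mul' := fun f g => by
      have {a b c d e f : Matrix m m ℂ} : (a * b * c) * (d * e * f) = a * (b * (c * d) * e) * f := by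
        simp only [mul_assoc]
      simp only [this, ContinuousMap.coe_mul, SetLike.coe_mem, Unitary.star_mul_self_of_mem,
        mul_one, diagonal_mul_diagonal, Function.comp_apply]
      congr! with i
      simp
    map_zero' := by simp [Pi.zero_def (M := fun _ : m ↦ ℂ)]
    map_add' := fun f g => by
      simp only [ContinuousMap.coe_add, ← add_mul, ← mul_add, diagonal_add, Function.comp_apply]
      congr! with i
      simp
    commutes' := fun r => by
      simp only [Function.comp_def, algebraMap_apply, smul_eq_mul, mul_one]
      rw [← mul_one (algebraMap _ _ _), ← Unitary.coe_mul_star_self U,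
        ← Algebra.left_comm, Unitary.coe_star, mul_assoc]
      congr!
    map_star' := fun f => by
      simp only [star_trivial, StarMul.star_mul, star_star, star_eq_conjTranspose (diagonal _),
        diagonal_conjTranspose, mul_assoc, Unitary.coe_star]
      congr!
      ext
      simp }
  have hcont : Continuous φ := by
    refine (Continuous.matrix_mul (Continuous.matrix_mul continuous_const ?_) continuous_const)
    exact Continuous.matrix_diagonal <| by fun_prop
  have hφ_id : φ (ContinuousMap.restrict (spectrum ℝ A) (ContinuousMap.id ℝ)) = A := by
    conv_rhs => rw [hAdef]
    congr!
  have key : cfcHom hA = φ := cfcHom_eq_of_continuous_of_map_id hA φ hcont hφ_id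
  have hf : ContinuousOn f (spectrum ℝ A) := by
    rw [continuousOn_iff_continuous_restrict]; fun_prop
  rw [cfc_apply f A hA hf, key]
  rfl

end Workhorse

section Kron
variable {a b : Type*} [Fintype a] [DecidableEq a] [Fintype b] [DecidableEq b]

lemma kron_conjTranspose_s8 (A : Matrix a a ℂ) (B : Matrix b b ℂ) :
    (A ⊗ₖ B)ᴴ = Aᴴ ⊗ₖ Bᴴ := by
  ext ⟨i, j⟩ ⟨i', j'⟩
  simp [conjTranspose_apply, mul_comm]

lemma kron_unitary {A : Matrix a a ℂ} {B : Matrix b b ℂ}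
    (hA : A ∈ unitary (Matrix a a ℂ)) (hB : B ∈ unitary (Matrix b b ℂ)) :
    A ⊗ₖ B ∈ unitary (Matrix (a × b) (a × b) ℂ) := by
  rw [Unitary.mem_iff] at hA hB ⊢
  simp only [star_eq_conjTranspose, kron_conjTranspose_s8, ← mul_kronecker_mul] at *
  rw [hA.1, hB.1, hA.2, hB.2, one_kronecker_one]
  exact ⟨rfl, rfl⟩

end Kron

section BD
variable {K : Type*} [Fintype K] [DecidableEq K] {f : K → Type*}
  [∀ k, Fintype (f k)] [∀ k, DecidableEq (f k)]

lemma blockDiagonal'_unitary {U : ∀ k, Matrix (f k) (f k) ℂ}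
    (hU : ∀ k, U k ∈ unitary (Matrix (f k) (f k) ℂ)) :
    blockDiagonal' U ∈ unitary (Matrix (Σ k, f k) (Σ k, f k) ℂ) := by
  simp only [Unitary.mem_iff] at hU ⊢
  simp only [star_eq_conjTranspose, blockDiagonal'_conjTranspose, ← blockDiagonal'_mul]
  constructor
  · rw [show (fun k => (U k)ᴴ * U k) = fun _ => 1 from funext fun k => (hU k).1]
    exact blockDiagonal'_one
  · rw [show (fun k => U k * (U k)ᴴ) = fun _ => 1 from funext fun k => (hU k).2]
    exact blockDiagonal'_one

end BD

section Main
variable {K : Type*} [Fintype K] [DecidableEq K]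
  {d e : K → Type*}
  [∀ k, Fintype (d k)] [∀ k, DecidableEq (d k)]
  [∀ k, Fintype (e k)] [∀ k, DecidableEq (e k)]

lemma matLog_blockDiagonal_kron (ς : ∀ k, Matrix (d k) (d k) ℂ) (ω : ∀ k, Matrix (e k) (e k) ℂ)
    (hς : ∀ k, (ς k).PosDef) (hω : ∀ k, (ω k).PosDef) :
    matLog (blockDiagonal' fun k => (ς k) ⊗ₖ (ω k))
      = blockDiagonal' (fun k => ((hς k).1.cfc Real.log) ⊗ₖ (1 : Matrix (e k) (e k) ℂ))
      + blockDiagonal' (fun k => (1 : Matrix (d k) (d k) ℂ) ⊗ₖ ((hω k).1.cfc Real.log)) := by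
  set Us : ∀ k, Matrix (d k × e k) (d k × e k) ℂ := fun k =>
    ((hς k).1.eigenvectorUnitary : Matrix (d k) (d k) ℂ)
      ⊗ₖ ((hω k).1.eigenvectorUnitary : Matrix (e k) (e k) ℂ) with hUs_def
  have hUs : ∀ k, Us k ∈ unitary (Matrix (d k × e k) (d k × e k) ℂ) := fun k =>
    kron_unitary ((hς k).1.eigenvectorUnitary).2 ((hω k).1.eigenvectorUnitary).2
  set W : unitary (Matrix (Σ k, d k × e k) (Σ k, d k × e k) ℂ) :=
    ⟨blockDiagonal' Us, blockDiagonal'_unitary hUs⟩ with hW_def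
  set l : (Σ k, d k × e k) → ℝ := fun i =>
    (hς i.1).1.eigenvalues i.2.1 * (hω i.1).1.eigenvalues i.2.2 with hl_def
  have hWstar : star (W : Matrix (Σ k, d k × e k) (Σ k, d k × e k) ℂ)
      = blockDiagonal' (fun k => (Us k)ᴴ) := by
    rw [hW_def, star_eq_conjTranspose]
    exact blockDiagonal'_conjTranspose _
  have conj_block : ∀ B : ∀ k, Matrix (d k × e k) (d k × e k) ℂ,
      (W : Matrix (Σ k, d k × e k) (Σ k, d k × e k) ℂ) * blockDiagonal' B
          * star (W : Matrix (Σ k, d k × e k) (Σ k, d k × e k) ℂ)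
        = blockDiagonal' (fun k => Us k * B k * (Us k)ᴴ) := by
    intro B
    rw [hWstar, hW_def]
    simp only [← blockDiagonal'_mul]
  have hdecomp : (blockDiagonal' fun k => (ς k) ⊗ₖ (ω k))
      = (W : Matrix (Σ k, d k × e k) (Σ k, d k × e k) ℂ)
        * diagonal (fun i => (l i : ℂ))
        * star (W : Matrix (Σ k, d k × e k) (Σ k, d k × e k) ℂ) := by
    have hdiag : (diagonal (fun i : (Σ k, d k × e k) => (l i : ℂ)))
        = blockDiagonal' (fun k : K => diagonal (fun p : d k × e k => (l ⟨k, p⟩ : ℂ))) := by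
      rw [blockDiagonal'_diagonal]
    rw [hdiag, conj_block]
    refine congrArg _ (funext fun k : K => ?_)
    have hd : diagonal (fun p : d k × e k => (l ⟨k, p⟩ : ℂ))
        = diagonal (RCLike.ofReal ∘ (hς k).1.eigenvalues)
          ⊗ₖ diagonal (RCLike.ofReal ∘ (hω k).1.eigenvalues) := by
      rw [diagonal_kronecker_diagonal]
      congr 1
      funext p
      simp [hl_def]
    rw [hUs_def]
    conv_lhs => rw [(hς k).1.spectral_theorem, (hω k).1.spectral_theorem, Unitary.conjStarAlgAut_apply,
      Unitary.conjStarAlgAut_apply]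
    rw [mul_kronecker_mul, mul_kronecker_mul, hd]
    congr 1
    simp [kron_conjTranspose_s8, star_eq_conjTranspose]
  have hpos₁ : ∀ i : (Σ k, d k × e k), 0 < (hς i.1).1.eigenvalues i.2.1 := fun i =>
    (hς i.1).eigenvalues_pos i.2.1
  have hpos₂ : ∀ i : (Σ k, d k × e k), 0 < (hω i.1).1.eigenvalues i.2.2 := fun i =>
    (hω i.1).eigenvalues_pos i.2.2
  rw [matLog, hdecomp, cfc_unitary_conj_diag]
  have hsplit : diagonal (fun i : (Σ k, d k × e k) => (Real.log (l i) : ℂ))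
      = diagonal (fun i : (Σ k, d k × e k) =>
          (Real.log ((hς i.1).1.eigenvalues i.2.1) : ℂ))
        + diagonal (fun i : (Σ k, d k × e k) =>
          (Real.log ((hω i.1).1.eigenvalues i.2.2) : ℂ)) := by
    ext i j
    rcases eq_or_ne i j with rfl | h
    · simp only [diagonal_apply_eq, Matrix.add_apply, hl_def]
      rw [Real.log_mul (hpos₁ i).ne' (hpos₂ i).ne']
      push_cast
      ring
    · simp [Matrix.add_apply, diagonal_apply_ne _ h]
  rw [hsplit, mul_add, add_mul]
  congr 1
  · have hdiag : diagonal (fun i : (Σ k, d k × e k) =>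
          (Real.log ((hς i.1).1.eigenvalues i.2.1) : ℂ))
        = blockDiagonal' (fun k : K => diagonal
            (fun p : d k × e k => (Real.log ((hς k).1.eigenvalues p.1) : ℂ))) := by
      rw [blockDiagonal'_diagonal]
    rw [hdiag, conj_block]
    refine congrArg _ (funext fun k : K => ?_)
    have hd : diagonal (fun p : d k × e k => (Real.log ((hς k).1.eigenvalues p.1) : ℂ))
        = diagonal (RCLike.ofReal ∘ Real.log ∘ (hς k).1.eigenvalues)
          ⊗ₖ (1 : Matrix (e k) (e k) ℂ) := by
      rw [← diagonal_one, diagonal_kronecker_diagonal]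
      congr 1
      funext p
      simp
    rw [hd, hUs_def, kron_conjTranspose_s8, ← mul_kronecker_mul, ← mul_kronecker_mul, mul_one]
    have h1 : ((hω k).1.eigenvectorUnitary : Matrix (e k) (e k) ℂ)
        * (((hω k).1.eigenvectorUnitary : Matrix (e k) (e k) ℂ))ᴴ = 1 := by
      simpa [star_eq_conjTranspose] using Unitary.coe_mul_star_self ((hω k).1.eigenvectorUnitary)
    rw [h1, Matrix.IsHermitian.cfc, Unitary.conjStarAlgAut_apply, star_eq_conjTranspose]
  · have hdiag : diagonal (fun i : (Σ k, d k × e k) =>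
          (Real.log ((hω i.1).1.eigenvalues i.2.2) : ℂ))
        = blockDiagonal' (fun k : K => diagonal
            (fun p : d k × e k => (Real.log ((hω k).1.eigenvalues p.2) : ℂ))) := by
      rw [blockDiagonal'_diagonal]
    rw [hdiag, conj_block]
    refine congrArg _ (funext fun k : K => ?_)
    have hd : diagonal (fun p : d k × e k => (Real.log ((hω k).1.eigenvalues p.2) : ℂ))
        = (1 : Matrix (d k) (d k) ℂ)
          ⊗ₖ diagonal (RCLike.ofReal ∘ Real.log ∘ (hω k).1.eigenvalues) := by
      rw [← diagonal_one, diagonal_kronecker_diagonal]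
      congr 1
      funext p
      simp
    rw [hd, hUs_def, kron_conjTranspose_s8, ← mul_kronecker_mul, ← mul_kronecker_mul, mul_one]
    have h1 : ((hς k).1.eigenvectorUnitary : Matrix (d k) (d k) ℂ)
        * (((hς k).1.eigenvectorUnitary : Matrix (d k) (d k) ℂ))ᴴ = 1 := by
      simpa [star_eq_conjTranspose] using Unitary.coe_mul_star_self ((hς k).1.eigenvectorUnitary)
    rw [h1, Matrix.IsHermitian.cfc, Unitary.conjStarAlgAut_apply, star_eq_conjTranspose]

end Main

section Trace
variable {K : Type*} [Fintype K] [DecidableEq K]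
  {d e : K → Type*}
  [∀ k, Fintype (d k)] [∀ k, DecidableEq (d k)]
  [∀ k, Fintype (e k)] [∀ k, DecidableEq (e k)]

lemma trace_mul_blockKronOne (M : ∀ k, Matrix (d k) (d k) ℂ)
    (X : Matrix (Σ k, d k × e k) (Σ k, d k × e k) ℂ)
    (hX : ∀ k, ∀ a a' : d k, ∑ b : e k, X ⟨k, (a, b)⟩ ⟨k, (a', b)⟩ = 0) :
    trace (X * blockDiagonal' fun k => (M k) ⊗ₖ (1 : Matrix (e k) (e k) ℂ)) = 0 := by
  classical
  set Y : Matrix (Σ k, d k × e k) (Σ k, d k × e k) ℂ :=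
    blockDiagonal' fun k => (M k) ⊗ₖ (1 : Matrix (e k) (e k) ℂ) with hY_def
  have step1 : ∀ (k : K) (p : d k × e k),
      (X * Y) ⟨k, p⟩ ⟨k, p⟩
        = ∑ q : d k × e k, X ⟨k, p⟩ ⟨k, q⟩
            * (M k q.1 p.1 * if q.2 = p.2 then 1 else 0) := by
    intro k p
    rw [mul_apply, ← Finset.univ_sigma_univ, Finset.sum_sigma]
    rw [Fintype.sum_eq_single k]
    · refine Finset.sum_congr rfl fun q _ => ?_
      congr 1
      show Y ⟨k, q⟩ ⟨k, p⟩ = _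
      simp [hY_def, blockDiagonal'_apply, Matrix.one_apply]
    · intro k' hk'
      refine Finset.sum_eq_zero fun q _ => ?_
      have hz : Y ⟨k', q⟩ ⟨k, p⟩ = 0 := by
        simp [hY_def, blockDiagonal'_apply, hk']
      rw [hz, mul_zero]
  calc trace (X * Y)
      = ∑ k : K, ∑ p : d k × e k, (X * Y) ⟨k, p⟩ ⟨k, p⟩ := by
        rw [Matrix.trace, ← Finset.univ_sigma_univ, Finset.sum_sigma]; rfl
    _ = ∑ k : K, ∑ p : d k × e k, ∑ q : d k × e k,
          X ⟨k, p⟩ ⟨k, q⟩ * (M k q.1 p.1 * if q.2 = p.2 then 1 else 0) :=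
        Finset.sum_congr rfl fun k _ => Finset.sum_congr rfl fun p _ => step1 k p
    _ = ∑ k : K, ∑ a : d k, ∑ b : e k, ∑ a' : d k,
          X ⟨k, (a, b)⟩ ⟨k, (a', b)⟩ * M k a' a := by
        refine Finset.sum_congr rfl fun k _ => ?_
        rw [Fintype.sum_prod_type]
        refine Finset.sum_congr rfl fun a _ => Finset.sum_congr rfl fun b _ => ?_
        rw [Fintype.sum_prod_type]
        refine Finset.sum_congr rfl fun a' _ => ?_
        calc ∑ b' : e k, X ⟨k, (a, b)⟩ ⟨k, (a', b')⟩
                * (M k a' a * if b' = b then 1 else 0)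
            = ∑ b' : e k, if b' = b
                then X ⟨k, (a, b)⟩ ⟨k, (a', b')⟩ * M k a' a else 0 := by
              refine Finset.sum_congr rfl fun b' _ => ?_
              split_ifs with h <;> simp [h]
          _ = X ⟨k, (a, b)⟩ ⟨k, (a', b)⟩ * M k a' a := by
              rw [Finset.sum_ite_eq']; simp
    _ = ∑ k : K, ∑ a : d k, ∑ a' : d k,
          (∑ b : e k, X ⟨k, (a, b)⟩ ⟨k, (a', b)⟩) * M k a' a := by
        refine Finset.sum_congr rfl fun k _ => Finset.sum_congr rfl fun a _ => ?_
        rw [Finset.sum_comm]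
        exact Finset.sum_congr rfl fun a' _ => (Finset.sum_mul _ _ _).symm
    _ = 0 := by simp [hX]

end Trace


/-- If `σᵢ = ⊕_k ςᵢ_k ⊗ₖ ω_k` (with the same positive definite states `ω_k`) and the partial
trace over `e k` of every diagonal block of `X` vanishes, then
`tr (X * (log σ₁ − log σ₂)) = 0`. -/
theorem trace_mul_matLog_sub_eq_zero
    {K : Type*} [Fintype K] [DecidableEq K]
    (d e : K → Type*)
    [∀ k, Fintype (d k)] [∀ k, DecidableEq (d k)] [∀ k, Nonempty (d k)]
    [∀ k, Fintype (e k)] [∀ k, DecidableEq (e k)] [∀ k, Nonempty (e k)]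
    (ς₁ ς₂ : ∀ k, Matrix (d k) (d k) ℂ) (ω : ∀ k, Matrix (e k) (e k) ℂ)
    (hς₁ : ∀ k, (ς₁ k).PosDef) (hς₂ : ∀ k, (ς₂ k).PosDef)
    (hω : ∀ k, (ω k).PosDef) (hωtr : ∀ k, (ω k).trace = 1)
    (X : Matrix (Σ k, d k × e k) (Σ k, d k × e k) ℂ)
    (hX : ∀ k, ∀ a a' : d k, ∑ b : e k, X ⟨k, (a, b)⟩ ⟨k, (a', b)⟩ = 0) :
    Matrix.trace
      (X * (matLog (Matrix.blockDiagonal' fun k => (ς₁ k) ⊗ₖ (ω k))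
          - matLog (Matrix.blockDiagonal' fun k => (ς₂ k) ⊗ₖ (ω k)))) = 0 := by
  rw [matLog_blockDiagonal_kron ς₁ ω hς₁ hω, matLog_blockDiagonal_kron ς₂ ω hς₂ hω,
    add_sub_add_right_eq_sub, ← blockDiagonal'_sub]
  have hk : (fun k => ((hς₁ k).1.cfc Real.log) ⊗ₖ (1 : Matrix (e k) (e k) ℂ)
        - ((hς₂ k).1.cfc Real.log) ⊗ₖ (1 : Matrix (e k) (e k) ℂ))
      = fun k => (((hς₁ k).1.cfc Real.log) - ((hς₂ k).1.cfc Real.log))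
          ⊗ₖ (1 : Matrix (e k) (e k) ℂ) := by
    funext k
    ext ⟨i, j⟩ ⟨i', j'⟩
    simp [Matrix.sub_apply, sub_mul]
  rw [show (fun k => ((hς₁ k).1.cfc Real.log) ⊗ₖ (1 : Matrix (e k) (e k) ℂ))
        - (fun k => ((hς₂ k).1.cfc Real.log) ⊗ₖ (1 : Matrix (e k) (e k) ℂ))
      = fun k => (((hς₁ k).1.cfc Real.log) - ((hς₂ k).1.cfc Real.log))
          ⊗ₖ (1 : Matrix (e k) (e k) ℂ) from hk]
  exact trace_mul_blockKronOne _ X hX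
end

section
/- Let d ≥ 1 and let p : Fin d × Fin d → ℝ be a joint probability mass function (p(i,j) ≥ 0, Σ p = 1) with second marginal p_Y(j) := Σ_i p(i,j), and error probability p_e := Σ_{(i,j), i ≠ j} p(i,j). Then the conditional Shannon entropy satisfies H(p) − H(p_Y) ≤ h(p_e) + p_e · Real.log (d − 1), where H(q) := Σ Real.negMulLog (q ·) denotes Shannon entropy and h(δ) := negMulLog δ + negMulLog (1 − δ) is the binary entropy. -/
/-! By Gibbs' inequality applied to `q (x, y) = p_Y y * r (x, y)`, the conditional entropy
`H(X|Y)` is at most the cross entropy `-∑ p log r` against any channel `r` whose columns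
`r (·, y)` have mass at most `1`. Fix a guess `g y` of `x` from `y` (`g = id` in the theorem). For
the channel that puts mass `1 - p_e` on `g y` and `p_e / (d - 1)` on each of the other `d - 1`
values, this cross entropy is exactly `h(p_e) + p_e log (d - 1)`. -/

open Finset Real

theorem mul_log_sub_mul_log_le_sub {a b : ℝ} (ha : 0 ≤ a) (hb : 0 ≤ b) (hab : 0 < a → 0 < b) :
    a * log b - a * log a ≤ b - a := by
  rcases ha.eq_or_lt with rfl | ha
  · simpa using hb
  have hb := hab ha
  calc a * log b - a * log a = a * log (b / a) := by rw [log_div hb.ne' ha.ne']; ring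
    _ ≤ a * (b / a - 1) := by gcongr; exact log_le_sub_one_of_pos (div_pos hb ha)
    _ = b - a := by field_simp

theorem sum_mul_log_le_sum_mul_log {ι : Type*} [Fintype ι] {p q : ι → ℝ}
    (hp : ∀ i, 0 ≤ p i) (hq : ∀ i, 0 ≤ q i) (hpq : ∀ i, 0 < p i → 0 < q i)
    (hsum : ∑ i, q i ≤ ∑ i, p i) :
    ∑ i, p i * log (q i) ≤ ∑ i, p i * log (p i) := by
  have := sum_le_sum fun i (_ : i ∈ univ) => mul_log_sub_mul_log_le_sub (hp i) (hq i) (hpq i)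
  simp only [sum_sub_distrib] at this
  linarith

noncomputable def entropy {ι : Type*} [Fintype ι] (q : ι → ℝ) : ℝ := ∑ i, negMulLog (q i)

section Marginal

variable {α β : Type*} [Fintype α]

def marginalSnd (p : α × β → ℝ) (j : β) : ℝ := ∑ i, p (i, j)

theorem le_marginalSnd {p : α × β → ℝ} (hp : ∀ x, 0 ≤ p x) (x : α × β) :
    p x ≤ marginalSnd p x.2 :=
  single_le_sum (fun i _ => hp (i, x.2)) (mem_univ x.1)

variable [Fintype β]

theorem sum_marginalSnd (p : α × β → ℝ) : ∑ j, marginalSnd p j = ∑ x, p x :=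
  (Fintype.sum_prod_type_right p).symm

theorem sum_mul_snd_eq_sum_marginalSnd_mul (p : α × β → ℝ) (f : β → ℝ) :
    ∑ x, p x * f x.2 = ∑ j, marginalSnd p j * f j := by
  simp only [Fintype.sum_prod_type_right, marginalSnd, sum_mul]

theorem entropy_sub_entropy_marginalSnd_le_neg_sum_mul_log {p r : α × β → ℝ}
    (hp : ∀ x, 0 ≤ p x) (hr : ∀ x, 0 ≤ r x) (hr1 : ∀ j, ∑ i, r (i, j) ≤ 1)
    (hpr : ∀ x, 0 < p x → 0 < r x) :
    entropy p - entropy (marginalSnd p) ≤ -∑ x, p x * log (r x) := by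
  set q : α × β → ℝ := fun x => marginalSnd p x.2 * r x
  have hpY : ∀ j, 0 ≤ marginalSnd p j := fun j => sum_nonneg fun i _ => hp (i, j)
  have hpq : ∀ x, 0 < p x → 0 < q x := fun x hx =>
    mul_pos (hx.trans_le (le_marginalSnd hp x)) (hpr x hx)
  have hq_sum : ∑ x, q x ≤ ∑ x, p x := calc
    ∑ x, q x = ∑ j, marginalSnd p j * ∑ i, r (i, j) := by
      simp only [q, Fintype.sum_prod_type_right, mul_sum]
    _ ≤ ∑ j, marginalSnd p j := sum_le_sum fun j _ => mul_le_of_le_one_right (hpY j) (hr1 j)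
    _ = ∑ x, p x := sum_marginalSnd p
  have hlog_split : ∀ x, p x * log (q x) = p x * log (marginalSnd p x.2) + p x * log (r x) := by
    intro x
    rcases (hp x).eq_or_lt with h | h
    · simp [← h]
    · rw [log_mul (h.trans_le (le_marginalSnd hp x)).ne' (hpr x h).ne']
      ring
  have gibbs := sum_mul_log_le_sum_mul_log (q := q) hp
    (fun x => mul_nonneg (hpY x.2) (hr x)) hpq hq_sum
  simp only [hlog_split, sum_add_distrib,
    sum_mul_snd_eq_sum_marginalSnd_mul p fun j => log (marginalSnd p j)] at gibbs
  simp only [entropy, negMulLog, neg_mul, sum_neg_distrib]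
  linarith

end Marginal

section Fano

variable {α β : Type*} [Fintype α] [DecidableEq α]

noncomputable def fanoKernel (g : β → α) (e : ℝ) (x : α × β) : ℝ :=
  if x.1 = g x.2 then 1 - e else e / (Fintype.card α - 1)

theorem fanoKernel_nonneg (g : β → α) {e : ℝ} (he0 : 0 ≤ e) (he1 : e ≤ 1) (x : α × β) :
    0 ≤ fanoKernel g e x := by
  have : (1 : ℝ) ≤ Fintype.card α := by exact_mod_cast Fintype.card_pos_iff.2 ⟨x.1⟩
  unfold fanoKernel
  split_ifs
  · linarith
  · exact div_nonneg he0 (by linarith)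

theorem sum_fanoKernel_le_one (g : β → α) {e : ℝ} (he0 : 0 ≤ e) (j : β) :
    ∑ i, fanoKernel g e (i, j) ≤ 1 := by
  have hcard : ((univ.filter fun i => i ≠ g j).card : ℝ) = Fintype.card α - 1 := by
    rw [filter_ne' univ (g j), card_erase_of_mem (mem_univ _), card_univ,
      Nat.cast_sub (Fintype.card_pos_iff.2 ⟨g j⟩)]
    simp
  have hsum : ∑ i, fanoKernel g e (i, j)
      = 1 - e + (Fintype.card α - 1) * (e / (Fintype.card α - 1)) := by
    simp only [fanoKernel, sum_ite, filter_eq' univ (g j), mem_univ, if_true, sum_const,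
      card_singleton, hcard, nsmul_eq_mul, Nat.cast_one, one_mul]
  rcases eq_or_ne ((Fintype.card α : ℝ) - 1) 0 with h | h
  · simp [hsum, h, he0]
  · rw [hsum, mul_div_cancel₀ _ h]; linarith

variable [Fintype β]

def errorProb (g : β → α) (p : α × β → ℝ) : ℝ :=
  ∑ x ∈ univ.filter (fun x => x.1 ≠ g x.2), p x

theorem sum_filter_eq_add_errorProb (g : β → α) (p : α × β → ℝ) :
    ∑ x ∈ univ.filter (fun x => x.1 = g x.2), p x + errorProb g p = ∑ x, p x :=
  sum_filter_add_sum_filter_not _ _ _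

theorem errorProb_nonneg (g : β → α) {p : α × β → ℝ} (hp : ∀ x, 0 ≤ p x) :
    0 ≤ errorProb g p :=
  sum_nonneg fun x _ => hp x

theorem errorProb_le_one (g : β → α) {p : α × β → ℝ} (hp : ∀ x, 0 ≤ p x)
    (hp1 : ∑ x, p x = 1) : errorProb g p ≤ 1 := by
  have := sum_nonneg fun x (_ : x ∈ univ.filter (fun x => x.1 = g x.2)) => hp x
  linarith [sum_filter_eq_add_errorProb g p]

theorem le_errorProb (g : β → α) {p : α × β → ℝ} (hp : ∀ x, 0 ≤ p x) {x : α × β}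
    (hx : x.1 ≠ g x.2) : p x ≤ errorProb g p :=
  single_le_sum (fun y _ => hp y) (by simpa using hx)

theorem le_one_sub_errorProb (g : β → α) {p : α × β → ℝ} (hp : ∀ x, 0 ≤ p x)
    (hp1 : ∑ x, p x = 1) {x : α × β} (hx : x.1 = g x.2) : p x ≤ 1 - errorProb g p := by
  have := single_le_sum (fun y _ => hp y) (show x ∈ univ.filter (fun x => x.1 = g x.2) by simpa)
  linarith [sum_filter_eq_add_errorProb g p]

theorem fanoKernel_errorProb_pos (g : β → α) {p : α × β → ℝ} (hp : ∀ x, 0 ≤ p x)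
    (hp1 : ∑ x, p x = 1) {x : α × β} (hx : 0 < p x) : 0 < fanoKernel g (errorProb g p) x := by
  unfold fanoKernel
  split_ifs with h
  · linarith [le_one_sub_errorProb g hp hp1 h]
  · have : (1 : ℝ) < Fintype.card α := by exact_mod_cast Fintype.one_lt_card_iff.2 ⟨_, _, h⟩
    exact div_pos (hx.trans_le (le_errorProb g hp h)) (by linarith)

theorem sum_mul_log_fanoKernel (g : β → α) {p : α × β → ℝ} (hp1 : ∑ x, p x = 1) :
    ∑ x, p x * log (fanoKernel g (errorProb g p) x)
      = -(binEntropy (errorProb g p) + errorProb g p * log (Fintype.card α - 1)) := by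
  set e := errorProb g p
  have hdiag : ∑ x ∈ univ.filter (fun x => x.1 = g x.2), p x * log (fanoKernel g e x)
      = (1 - e) * log (1 - e) := by
    rw [sum_congr rfl fun x hx => by rw [fanoKernel, if_pos (mem_filter.1 hx).2], ← sum_mul]
    congr
    linarith [sum_filter_eq_add_errorProb g p]
  have hoff : ∑ x ∈ univ.filter (fun x => ¬ x.1 = g x.2), p x * log (fanoKernel g e x)
      = e * log (e / (Fintype.card α - 1)) := by
    rw [sum_congr rfl fun x hx => by rw [fanoKernel, if_neg (mem_filter.1 hx).2], ← sum_mul]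
    rfl
  have hlog : e * log (e / (Fintype.card α - 1)) = e * log e - e * log (Fintype.card α - 1) := by
    rcases eq_or_ne e 0 with he | he
    · simp [he]
    obtain ⟨x, hx, -⟩ := exists_ne_zero_of_sum_ne_zero he
    have : (1 : ℝ) < Fintype.card α := by
      exact_mod_cast Fintype.one_lt_card_iff.2 ⟨_, _, (mem_filter.1 hx).2⟩
    rw [log_div he (by linarith)]
    ring
  rw [← sum_filter_add_sum_filter_not univ (fun x => x.1 = g x.2), hdiag, hoff, hlog,
    binEntropy_eq_negMulLog_add_negMulLog_one_sub, negMulLog, negMulLog]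
  ring

theorem entropy_sub_entropy_marginalSnd_le_binEntropy_errorProb (g : β → α) {p : α × β → ℝ}
    (hp : ∀ x, 0 ≤ p x) (hp1 : ∑ x, p x = 1) :
    entropy p - entropy (marginalSnd p)
      ≤ binEntropy (errorProb g p) + errorProb g p * log (Fintype.card α - 1) := by
  have he0 := errorProb_nonneg g hp
  have he1 := errorProb_le_one g hp hp1
  have := entropy_sub_entropy_marginalSnd_le_neg_sum_mul_log hp (fanoKernel_nonneg g he0 he1)
    (sum_fanoKernel_le_one g he0) fun x => fanoKernel_errorProb_pos g hp hp1
  rwa [sum_mul_log_fanoKernel g hp1, neg_neg] at this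

end Fano

theorem fano_inequality_general
    (d : ℕ) (p : Fin d × Fin d → ℝ)
    (hp0 : ∀ x, 0 ≤ p x) (hp1 : ∑ x, p x = 1)
    (pe : ℝ)
    (hpe : pe = ∑ x ∈ Finset.univ.filter (fun x : Fin d × Fin d => x.1 ≠ x.2), p x) :
    (∑ x, Real.negMulLog (p x)) - (∑ j, Real.negMulLog (∑ i, p (i, j)))
      ≤ (Real.negMulLog pe + Real.negMulLog (1 - pe)) + pe * Real.log ((d : ℝ) - 1) := by
  subst hpe
  have := entropy_sub_entropy_marginalSnd_le_binEntropy_errorProb id hp0 hp1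
  rwa [Fintype.card_fin, binEntropy_eq_negMulLog_add_negMulLog_one_sub] at this

/-- Fano's inequality for a joint pmf `p` on `Fin d × Fin d`:
`H(X|Y) = H(p) − H(p_Y) ≤ h(p_e) + p_e · log (d − 1)`. -/
theorem fano_inequality
    (d : ℕ) (hd : 1 ≤ d) (p : Fin d × Fin d → ℝ)
    (hp0 : ∀ x, 0 ≤ p x) (hp1 : ∑ x, p x = 1)
    (pe : ℝ)
    (hpe : pe = ∑ x ∈ Finset.univ.filter (fun x : Fin d × Fin d => x.1 ≠ x.2), p x) :
    (∑ x, Real.negMulLog (p x)) - (∑ j, Real.negMulLog (∑ i, p (i, j)))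
      ≤ (Real.negMulLog pe + Real.negMulLog (1 - pe)) + pe * Real.log ((d : ℝ) - 1) :=
  fano_inequality_general d p hp0 hp1 pe hpe
end

section
/- Let ρ, σ ∈ M_n(ℂ) be positive definite states and let Λ > 0 be a real number such that Λ • σ − ρ is positive semidefinite (i.e. ρ ≼ Λ σ in the Loewner order). Then D(ρ‖σ) ≤ Real.log Λ. -/
open scoped ComplexOrder

open Matrix

private lemma traceMaster {n : Type*} [Fintype n] [DecidableEq n]
    (V U : Matrix n n ℂ) (f g : n → ℝ) :
    Matrix.trace (V * Matrix.diagonal (fun i => (f i : ℂ)) * star V *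
        (U * Matrix.diagonal (fun j => (g j : ℂ)) * star U))
      = ((∑ i, ∑ j, f i * g j * Complex.normSq ((star V * U) i j) : ℝ) : ℂ) := by
  set W := star V * U with hW
  have hsW : star W = star U * V := by
    rw [hW, Matrix.star_mul, star_star]
  have h1 : V * Matrix.diagonal (fun i => (f i : ℂ)) * star V *
        (U * Matrix.diagonal (fun j => (g j : ℂ)) * star U)
      = (V * Matrix.diagonal (fun i => (f i : ℂ))) *
        ((W * Matrix.diagonal (fun j => (g j : ℂ))) * star U) := by
    simp only [hW, Matrix.mul_assoc]
  rw [h1, Matrix.trace_mul_comm]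
  have h2 : W * Matrix.diagonal (fun j => (g j : ℂ)) * star U *
        (V * Matrix.diagonal (fun i => (f i : ℂ)))
      = W * Matrix.diagonal (fun j => (g j : ℂ)) * star W *
          Matrix.diagonal (fun i => (f i : ℂ)) := by
    rw [hsW]; simp only [Matrix.mul_assoc]
  rw [h2]
  rw [show Matrix.trace (W * Matrix.diagonal (fun j => (g j : ℂ)) * star W *
      Matrix.diagonal (fun i => (f i : ℂ)))
      = ∑ i, (W * Matrix.diagonal (fun j => (g j : ℂ)) * star W) i i * (f i : ℂ) from by
    simp [Matrix.trace, Matrix.diag, Matrix.mul_diagonal]]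
  push_cast
  refine Finset.sum_congr rfl fun i _ => ?_
  rw [show (W * Matrix.diagonal (fun j => (g j : ℂ)) * star W) i i
      = ∑ j, W i j * (g j : ℂ) * star (W i j) from by
    simp [Matrix.mul_apply, Matrix.diagonal_apply, Matrix.star_apply, mul_ite, mul_zero,
      ite_mul, zero_mul, Finset.sum_ite_eq']]
  rw [Finset.sum_mul]
  refine Finset.sum_congr rfl fun j _ => ?_
  rw [show W i j * (g j : ℂ) * star (W i j) = (g j : ℂ) * (W i j * star (W i j)) from by ring]
  simp only [Complex.star_def, Complex.mul_conj]
  ring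

private lemma vecIneq {n : Type*} [Fintype n] [DecidableEq n] (ρ σ : Matrix n n ℂ)
    (hρ : ρ.PosDef) (hσ : σ.PosDef) (Λ : ℝ) (hΛ : 0 < Λ)
    (hL : (Λ • σ - ρ).PosSemidef) (x : n → ℂ) :
    (star x ⬝ᵥ ((ρ * σ⁻¹ * ρ) *ᵥ x)).re ≤ Λ * (star x ⬝ᵥ (ρ *ᵥ x)).re := by
  have hinv : σ * σ⁻¹ = 1 := Matrix.mul_nonsing_inv σ hσ.det_pos.ne'.isUnit
  set w : n → ℂ := ρ *ᵥ x with hw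
  set z : n → ℂ := σ⁻¹ *ᵥ w with hzdef
  have hz : σ *ᵥ z = w := by
    rw [hzdef, Matrix.mulVec_mulVec, hinv, Matrix.one_mulVec]
  set s : ℂ := star z ⬝ᵥ (σ *ᵥ z) with hs
  set a : ℂ := star x ⬝ᵥ (ρ *ᵥ x) with ha
  set b : ℂ := star z ⬝ᵥ (ρ *ᵥ z) with hb
  have hzw : star w ⬝ᵥ z = s := by
    rw [← hz, Matrix.star_mulVec, hσ.1, hs]
    exact (Matrix.dotProduct_mulVec _ σ _).symm
  have hxz : star x ⬝ᵥ (ρ *ᵥ z) = s := by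
    have hsw : star w = star x ᵥ* ρ := by rw [hw, Matrix.star_mulVec, hρ.1]
    rw [Matrix.dotProduct_mulVec, ← hsw, hzw]
  have hzx : star z ⬝ᵥ (ρ *ᵥ x) = s := by
    rw [← hw, ← hz, hs]
  have hbs : b ≤ (Λ : ℂ) * s := by
    have h0 := hL.dotProduct_mulVec_nonneg z
    rw [Matrix.sub_mulVec, Matrix.smul_mulVec, dotProduct_sub,
      dotProduct_smul, ← hs, ← hb] at h0
    rw [← sub_nonneg]
    simpa [Complex.real_smul] using h0
  have hv := hρ.posSemidef.dotProduct_mulVec_nonneg ((Λ : ℂ) • x - z)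
  have hexp : star ((Λ : ℂ) • x - z) ⬝ᵥ (ρ *ᵥ ((Λ : ℂ) • x - z))
      = (Λ : ℂ) * ((Λ : ℂ) * a) - (Λ : ℂ) * s - (Λ : ℂ) * s + b := by
    simp only [star_sub, star_smul, Matrix.mulVec_sub, Matrix.mulVec_smul,
      sub_dotProduct, dotProduct_sub, smul_dotProduct,
      dotProduct_smul, smul_eq_mul, Complex.star_def, Complex.conj_ofReal]
    rw [hxz, hzx, ← ha, ← hb]
    ring
  rw [hexp] at hv
  have hv' : 0 ≤ Λ * (Λ * a.re) - Λ * s.re - Λ * s.re + b.re := by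
    have := (Complex.le_def.mp hv).1
    simpa [Complex.re_ofReal_mul] using this
  have hbs' : b.re ≤ Λ * s.re := by
    have := (Complex.le_def.mp hbs).1
    simpa [Complex.re_ofReal_mul] using this
  have hfin : s.re ≤ Λ * a.re := by
    have h1 : Λ * s.re ≤ Λ * (Λ * a.re) := by linarith
    exact le_of_mul_le_mul_left h1 hΛ
  have hLHS : star x ⬝ᵥ ((ρ * σ⁻¹ * ρ) *ᵥ x) = s := by
    rw [← Matrix.mulVec_mulVec, ← Matrix.mulVec_mulVec, ← hw, ← hzdef, hxz]
  rw [hLHS]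
  exact hfin

/-- If `ρ ≼ Λ σ` in the Loewner order for positive definite states `ρ`, `σ`,
then `D(ρ‖σ) ≤ log Λ`. -/
theorem relEntropy_le_log_of_loewner
    {n : Type*} [Fintype n] [DecidableEq n]
    (ρ σ : Matrix n n ℂ)
    (hρ : ρ.PosDef) (hρtr : ρ.trace = 1)
    (hσ : σ.PosDef) (hσtr : σ.trace = 1)
    (Λ : ℝ) (hΛ : 0 < Λ)
    (hL : (Λ • σ - ρ).PosSemidef) :
    relEntropy ρ σ ≤ Real.log Λ := by
  classical
  have hρh : ρ.IsHermitian := hρ.1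
  have hσh : σ.IsHermitian := hσ.1
  set V : Matrix n n ℂ := (hρh.eigenvectorUnitary : Matrix n n ℂ) with hVdef
  set U : Matrix n n ℂ := (hσh.eigenvectorUnitary : Matrix n n ℂ) with hUdef
  set p : n → ℝ := hρh.eigenvalues with hpdef
  set q : n → ℝ := hσh.eigenvalues with hqdef
  have hp : ∀ i, 0 < p i := hρ.eigenvalues_pos
  have hq : ∀ j, 0 < q j := hσ.eigenvalues_pos
  have hVV : star V * V = 1 := Unitary.coe_star_mul_self hρh.eigenvectorUnitary
  have hVV' : V * star V = 1 := Unitary.coe_mul_star_self hρh.eigenvectorUnitary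
  have hUU : star U * U = 1 := Unitary.coe_star_mul_self hσh.eigenvectorUnitary
  have hUU' : U * star U = 1 := Unitary.coe_mul_star_self hσh.eigenvectorUnitary
  have hρs : ρ = V * Matrix.diagonal (fun i => (p i : ℂ)) * star V :=
    hρh.spectral_theorem
  have hσs : σ = U * Matrix.diagonal (fun j => (q j : ℂ)) * star U :=
    hσh.spectral_theorem
  have hσinv : σ⁻¹ = U * Matrix.diagonal (fun j => (((q j)⁻¹ : ℝ) : ℂ)) * star U := by
    apply Matrix.inv_eq_right_inv
    nth_rewrite 1 [hσs]
    have h1 : U * Matrix.diagonal (fun j => (q j : ℂ)) * star U *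
          (U * Matrix.diagonal (fun j => (((q j)⁻¹ : ℝ) : ℂ)) * star U)
        = U * (Matrix.diagonal (fun j => (q j : ℂ)) * (star U * U) *
            Matrix.diagonal (fun j => (((q j)⁻¹ : ℝ) : ℂ))) * star U := by
      simp only [Matrix.mul_assoc]
    rw [h1, hUU, Matrix.mul_one, Matrix.diagonal_mul_diagonal]
    have h2 : (fun j => (q j : ℂ) * (((q j)⁻¹ : ℝ) : ℂ)) = fun _ => (1 : ℂ) := by
      funext j
      push_cast
      rw [mul_inv_cancel₀ (by exact_mod_cast (hq j).ne')]
    rw [h2, Matrix.diagonal_one, Matrix.mul_one, hUU']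
  have hρsq : ρ * ρ = V * Matrix.diagonal (fun i => ((p i * p i : ℝ) : ℂ)) * star V := by
    nth_rewrite 1 [hρs]; nth_rewrite 1 [hρs]
    have h1 : V * Matrix.diagonal (fun i => (p i : ℂ)) * star V *
          (V * Matrix.diagonal (fun i => (p i : ℂ)) * star V)
        = V * (Matrix.diagonal (fun i => (p i : ℂ)) * (star V * V) *
            Matrix.diagonal (fun i => (p i : ℂ))) * star V := by
      simp only [Matrix.mul_assoc]
    rw [h1, hVV, Matrix.mul_one, Matrix.diagonal_mul_diagonal]
    push_cast
    rfl
  have hlogρ : matLog ρ = V * Matrix.diagonal (fun i => ((Real.log (p i) : ℝ) : ℂ)) * star V := by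
    rw [matLog, hρh.cfc_eq]
    rfl
  have hlogσ : matLog σ = U * Matrix.diagonal (fun j => ((Real.log (q j) : ℝ) : ℂ)) * star U := by
    rw [matLog, hσh.cfc_eq]
    rfl
  -- row sums of |W i j|^2
  have hcrow : ∀ i, ∑ j, Complex.normSq ((star V * U) i j) = 1 := by
    intro i
    have hWW : (star V * U) * star (star V * U) = 1 := by
      rw [Matrix.star_mul, star_star]
      have : star V * U * (star U * V) = star V * (U * star U) * V := by
        simp only [Matrix.mul_assoc]
      rw [this, hUU', Matrix.mul_one, hVV]
    have h1 : ((star V * U) * star (star V * U)) i i = 1 := by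
      rw [hWW]; simp [Matrix.one_apply]
    rw [Matrix.mul_apply] at h1
    have h2 : ((∑ j, Complex.normSq ((star V * U) i j) : ℝ) : ℂ) = 1 := by
      rw [← h1]
      push_cast
      refine Finset.sum_congr rfl fun j _ => ?_
      rw [Matrix.star_apply]
      simp only [Complex.star_def, Complex.mul_conj]
    exact_mod_cast h2
  -- sum of eigenvalues of ρ is 1
  have hpsum : ∑ i, p i = 1 := by
    have h1 : Matrix.trace ρ = ((∑ i, p i : ℝ) : ℂ) := by
      nth_rewrite 1 [hρs]
      rw [Matrix.trace_mul_cycle, hVV, Matrix.one_mul, Matrix.trace_diagonal]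
      push_cast
      rfl
    rw [hρtr] at h1
    exact_mod_cast h1.symm
  -- trace formulas
  have tA : (Matrix.trace (ρ * matLog ρ)).re = ∑ i, p i * Real.log (p i) := by
    rw [hlogρ]
    nth_rewrite 1 [hρs]
    rw [traceMaster V V p (fun i => Real.log (p i)), Complex.ofReal_re, hVV]
    simp [Matrix.one_apply, apply_ite Complex.normSq, mul_ite, mul_zero, mul_one]
  have tB : (Matrix.trace (ρ * matLog σ)).re
      = ∑ i, ∑ j, p i * Real.log (q j) * Complex.normSq ((star V * U) i j) := by
    rw [hlogσ]
    nth_rewrite 1 [hρs]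
    rw [traceMaster V U p (fun j => Real.log (q j)), Complex.ofReal_re]
  have tT : (Matrix.trace (ρ * σ⁻¹ * ρ)).re
      = ∑ i, ∑ j, (p i * p i) * (q j)⁻¹ * Complex.normSq ((star V * U) i j) := by
    rw [Matrix.trace_mul_comm (ρ * σ⁻¹) ρ, ← Matrix.mul_assoc, hρsq, hσinv,
      traceMaster V U (fun i => p i * p i) (fun j => (q j)⁻¹), Complex.ofReal_re]
  -- trace bound from the Loewner condition
  have Tbound : (Matrix.trace (ρ * σ⁻¹ * ρ)).re ≤ Λ := by
    have hdiag : ∀ i : n, ((ρ * σ⁻¹ * ρ) i i).re ≤ Λ * (ρ i i).re := by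
      intro i
      have h := vecIneq ρ σ hρ hσ Λ hΛ hL (Pi.single i 1)
      have e1 : star (Pi.single i 1 : n → ℂ) ⬝ᵥ ((ρ * σ⁻¹ * ρ) *ᵥ Pi.single i 1)
          = (ρ * σ⁻¹ * ρ) i i := by
        simp [Matrix.mulVec_single, dotProduct, Pi.single_apply, apply_ite]
      have e2 : star (Pi.single i 1 : n → ℂ) ⬝ᵥ (ρ *ᵥ Pi.single i 1) = ρ i i := by
        simp [Matrix.mulVec_single, dotProduct, Pi.single_apply, apply_ite]
      rwa [e1, e2] at h
    have h1 : (Matrix.trace (ρ * σ⁻¹ * ρ)).re = ∑ i, ((ρ * σ⁻¹ * ρ) i i).re := by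
      rw [Matrix.trace]
      exact Complex.re_sum _ _
    have h2 : (Matrix.trace ρ).re = ∑ i, (ρ i i).re := by
      rw [Matrix.trace]
      exact Complex.re_sum _ _
    have h3 : ∑ i, ((ρ * σ⁻¹ * ρ) i i).re ≤ ∑ i, Λ * (ρ i i).re :=
      Finset.sum_le_sum fun i _ => hdiag i
    rw [h1]
    calc ∑ i, ((ρ * σ⁻¹ * ρ) i i).re ≤ ∑ i, Λ * (ρ i i).re := h3
      _ = Λ * (Matrix.trace ρ).re := by rw [h2, Finset.mul_sum]
      _ = Λ := by rw [hρtr]; simp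
  set T : ℝ := ∑ i, ∑ j, (p i * p i) * (q j)⁻¹ * Complex.normSq ((star V * U) i j) with hTdef
  have hT : T ≤ Λ := tT ▸ Tbound
  -- relEntropy expression
  have hRE : relEntropy ρ σ = (∑ i, p i * Real.log (p i))
      - ∑ i, ∑ j, p i * Real.log (q j) * Complex.normSq ((star V * U) i j) := by
    rw [relEntropy, mul_sub, Matrix.trace_sub, Complex.sub_re, tA, tB]
  -- pointwise logarithmic estimate
  have perterm : ∀ i j, p i * Complex.normSq ((star V * U) i j) *
        (Real.log (p i) - Real.log (q j) - Real.log Λ)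
      ≤ Complex.normSq ((star V * U) i j) * ((p i * p i) * (q j)⁻¹ / Λ - p i) := by
    intro i j
    have hlog : Real.log (p i) - Real.log (q j) - Real.log Λ
        = Real.log (p i / (Λ * q j)) := by
      rw [Real.log_div (hp i).ne' (mul_pos hΛ (hq j)).ne', Real.log_mul hΛ.ne' (hq j).ne']
      ring
    have hle : Real.log (p i / (Λ * q j)) ≤ p i / (Λ * q j) - 1 :=
      Real.log_le_sub_one_of_pos (div_pos (hp i) (mul_pos hΛ (hq j)))
    have hnn : 0 ≤ p i * Complex.normSq ((star V * U) i j) :=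
      mul_nonneg (hp i).le (Complex.normSq_nonneg _)
    calc p i * Complex.normSq ((star V * U) i j) *
          (Real.log (p i) - Real.log (q j) - Real.log Λ)
        ≤ p i * Complex.normSq ((star V * U) i j) * (p i / (Λ * q j) - 1) := by
          rw [hlog]; exact mul_le_mul_of_nonneg_left hle hnn
      _ = Complex.normSq ((star V * U) i j) * ((p i * p i) * (q j)⁻¹ / Λ - p i) := by
          field_simp
  -- sum up
  have li : ∀ i, ∑ j, p i * Complex.normSq ((star V * U) i j) *
        (Real.log (p i) - Real.log (q j) - Real.log Λ)
      = p i * Real.log (p i)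
        - (∑ j, p i * Real.log (q j) * Complex.normSq ((star V * U) i j))
        - p i * Real.log Λ := by
    intro i
    have h0 : ∀ j, p i * Complex.normSq ((star V * U) i j) *
          (Real.log (p i) - Real.log (q j) - Real.log Λ)
        = (p i * Real.log (p i)) * Complex.normSq ((star V * U) i j)
          - p i * Real.log (q j) * Complex.normSq ((star V * U) i j)
          - (p i * Real.log Λ) * Complex.normSq ((star V * U) i j) := fun j => by ring
    rw [Finset.sum_congr rfl fun j _ => h0 j, Finset.sum_sub_distrib, Finset.sum_sub_distrib,
      ← Finset.mul_sum, ← Finset.mul_sum, hcrow i, mul_one, mul_one]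
  have ri : ∀ i, ∑ j, Complex.normSq ((star V * U) i j) * ((p i * p i) * (q j)⁻¹ / Λ - p i)
      = (∑ j, (p i * p i) * (q j)⁻¹ * Complex.normSq ((star V * U) i j)) / Λ - p i := by
    intro i
    have h0 : ∀ j, Complex.normSq ((star V * U) i j) * ((p i * p i) * (q j)⁻¹ / Λ - p i)
        = ((p i * p i) * (q j)⁻¹ * Complex.normSq ((star V * U) i j)) / Λ
          - p i * Complex.normSq ((star V * U) i j) := fun j => by ring
    rw [Finset.sum_congr rfl fun j _ => h0 j, Finset.sum_sub_distrib, ← Finset.sum_div,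
      ← Finset.mul_sum, hcrow i, mul_one]
  have main : relEntropy ρ σ - Real.log Λ ≤ T / Λ - 1 := by
    have hsum : ∑ i, (p i * Real.log (p i)
          - (∑ j, p i * Real.log (q j) * Complex.normSq ((star V * U) i j))
          - p i * Real.log Λ)
        ≤ ∑ i, ((∑ j, (p i * p i) * (q j)⁻¹ * Complex.normSq ((star V * U) i j)) / Λ - p i) := by
      refine Finset.sum_le_sum fun i _ => ?_
      rw [← li i, ← ri i]
      exact Finset.sum_le_sum fun j _ => perterm i j
    have hL2 : ∑ i, (p i * Real.log (p i)
          - (∑ j, p i * Real.log (q j) * Complex.normSq ((star V * U) i j))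
          - p i * Real.log Λ)
        = relEntropy ρ σ - Real.log Λ := by
      rw [Finset.sum_sub_distrib, Finset.sum_sub_distrib, hRE, ← Finset.sum_mul, hpsum, one_mul]
    have hR2 : ∑ i, ((∑ j, (p i * p i) * (q j)⁻¹ * Complex.normSq ((star V * U) i j)) / Λ - p i)
        = T / Λ - 1 := by
      rw [Finset.sum_sub_distrib, ← Finset.sum_div, hpsum, hTdef]
    rw [← hL2, ← hR2]
    exact hsum
  have hTl : T / Λ - 1 ≤ 0 := by
    have h1 : T / Λ ≤ 1 := (div_le_one hΛ).mpr hT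
    linarith
  linarith
end

section
/- Fix d ≥ 1 and n ≥ 1. Let ψ : Fin d × Fin d → ℂ be the maximally entangled vector ψ(i,j) = (1/√d) if i = j and 0 otherwise, and let Φ_ME := |ψ⟩⟨ψ| ∈ Matrix (Fin d × Fin d) (Fin d × Fin d) ℂ. Let P, Ψ : Matrix (Fin n) (Fin n) ℂ →ₗ[ℂ] Matrix (Fin n) (Fin n) ℂ, E : Matrix (Fin d) (Fin d) ℂ →ₗ[ℂ] Matrix (Fin n) (Fin n) ℂ, and D : Matrix (Fin n) (Fin n) ℂ →ₗ[ℂ] Matrix (Fin d) (Fin d) ℂ be linear maps, let ε ∈ (0,1), and set Φ := ε • P + (1 − ε) • Ψ. Assume (id_d ⊗ (D ∘ Φ ∘ E))(Φ_ME) = Φ_ME, and assume that both (id_d ⊗ (D ∘ P ∘ E))(Φ_ME) and (id_d ⊗ (D ∘ Ψ ∘ E))(Φ_ME) are positive semidefinite of trace 1. Then (id_d ⊗ (D ∘ P ∘ E))(Φ_ME) = Φ_ME. -/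
open scoped ComplexOrder

/-- The amplification `id_d ⊗ N` of a linear map `N` on `Matrix (Fin d) (Fin d) ℂ`,
acting entrywise by `((id_d ⊗ N)(M))_{(i,j),(i',j')} = (N(M^{(i,i')}))_{j,j'}` where
`M^{(i,i')}_{j,j'} = M_{(i,j),(i',j')}`. -/
noncomputable def ampId {d : ℕ}
    (N : Matrix (Fin d) (Fin d) ℂ →ₗ[ℂ] Matrix (Fin d) (Fin d) ℂ)
    (M : Matrix (Fin d × Fin d) (Fin d × Fin d) ℂ) :
    Matrix (Fin d × Fin d) (Fin d × Fin d) ℂ :=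
  Matrix.of fun p q => N (Matrix.of fun j j' => M (p.1, j) (q.1, j')) p.2 q.2

/-- The maximally entangled vector on `Fin d × Fin d`. -/
noncomputable def meVec (d : ℕ) : Fin d × Fin d → ℂ :=
  fun x => if x.1 = x.2 then (1 / Real.sqrt d : ℂ) else 0

/-- The maximally entangled state `|ψ⟩⟨ψ|` on `Fin d × Fin d`. -/
noncomputable def meState (d : ℕ) : Matrix (Fin d × Fin d) (Fin d × Fin d) ℂ :=
  Matrix.vecMulVec (meVec d) (star (meVec d))

open Matrix

lemma psd_trace_aux {m : Type*} [Fintype m] [DecidableEq m]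
    {X : Matrix m m ℂ} (hX : X.PosSemidef) :
    0 ≤ X.trace ∧ (X.trace = 0 → X = 0) := by
  open scoped MatrixOrder in
  obtain ⟨B, hB⟩ := CStarAlgebra.nonneg_iff_eq_star_mul_self.mp hX.nonneg
  rw [Matrix.star_eq_conjTranspose] at hB
  subst hB
  have htr : (Bᴴ * B).trace = ((∑ j, ∑ i, Complex.normSq (B i j) : ℝ) : ℂ) := by
    simp only [Matrix.trace, Matrix.diag, Matrix.mul_apply, Matrix.conjTranspose_apply]
    push_cast
    refine Finset.sum_congr rfl fun j _ => Finset.sum_congr rfl fun i _ => ?_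
    rw [mul_comm, Complex.star_def, Complex.mul_conj]
  have hnn : (0:ℝ) ≤ ∑ j, ∑ i, Complex.normSq (B i j) :=
    Finset.sum_nonneg fun j _ => Finset.sum_nonneg fun i _ => Complex.normSq_nonneg _
  constructor
  · rw [htr]
    exact_mod_cast hnn
  · intro h
    rw [htr] at h
    have hsum : (∑ j, ∑ i, Complex.normSq (B i j) : ℝ) = 0 := by exact_mod_cast h
    have hB : B = 0 := by
      ext i j
      have h1 := (Finset.sum_eq_zero_iff_of_nonneg
        (fun j _ => Finset.sum_nonneg fun i _ => Complex.normSq_nonneg _)).mp hsum j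
        (Finset.mem_univ _)
      have h2 := (Finset.sum_eq_zero_iff_of_nonneg
        (fun i _ => Complex.normSq_nonneg _)).mp h1 i (Finset.mem_univ _)
      exact Complex.normSq_eq_zero.mp h2
    rw [hB]
    simp

/-- Perfect zero-error transmission through a convex combination `Φ = ε P + (1 − ε) Ψ`
forces perfect transmission through `P`. -/
theorem zero_error_convex_combination
    (d n : ℕ) (hd : 1 ≤ d) (hn : 1 ≤ n)
    (P Ψ : Matrix (Fin n) (Fin n) ℂ →ₗ[ℂ] Matrix (Fin n) (Fin n) ℂ)
    (E : Matrix (Fin d) (Fin d) ℂ →ₗ[ℂ] Matrix (Fin n) (Fin n) ℂ)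
    (D : Matrix (Fin n) (Fin n) ℂ →ₗ[ℂ] Matrix (Fin d) (Fin d) ℂ)
    (ε : ℝ) (hε : ε ∈ Set.Ioo (0 : ℝ) 1)
    (hΦ : ampId (D ∘ₗ (ε • P + (1 - ε) • Ψ) ∘ₗ E) (meState d) = meState d)
    (hPpos : (ampId (D ∘ₗ P ∘ₗ E) (meState d)).PosSemidef)
    (hPtr : (ampId (D ∘ₗ P ∘ₗ E) (meState d)).trace = 1)
    (hΨpos : (ampId (D ∘ₗ Ψ ∘ₗ E) (meState d)).PosSemidef)
    (hΨtr : (ampId (D ∘ₗ Ψ ∘ₗ E) (meState d)).trace = 1) :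
    ampId (D ∘ₗ P ∘ₗ E) (meState d) = meState d := by
  have hd0 : (0:ℝ) ≤ d := by positivity
  have hdC : (d:ℂ) ≠ 0 := by exact_mod_cast Nat.one_le_iff_ne_zero.mp hd
  set ψ := meVec d with hψdef
  set S := meState d with hSdef
  set A := ampId (D ∘ₗ P ∘ₗ E) S with hAdef
  set B := ampId (D ∘ₗ Ψ ∘ₗ E) S with hBdef
  -- basic facts about the maximally entangled state
  have hstar : star ((1 : ℂ) / (Real.sqrt d : ℂ)) = (1 : ℂ) / (Real.sqrt d : ℂ) := by
    rw [star_div₀, star_one, Complex.star_def, Complex.conj_ofReal]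
  have hcc : ((1:ℂ) / (Real.sqrt d : ℂ)) * ((1:ℂ) / (Real.sqrt d : ℂ)) = 1 / (d:ℂ) := by
    rw [div_mul_div_comm, one_mul]
    congr 1
    norm_cast
    exact Real.mul_self_sqrt hd0
  have hterm : ∀ r : Fin d × Fin d, star (ψ r) * ψ r =
      if r.1 = r.2 then (1 / (d:ℂ)) else 0 := by
    intro r
    simp only [hψdef, meVec]
    split_ifs
    · rw [hstar, hcc]
    · simp
  have hsum : ∑ r : Fin d × Fin d, star (ψ r) * ψ r = 1 := by
    simp_rw [hterm]
    rw [Fintype.sum_prod_type]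
    simp [Finset.sum_ite_eq, Finset.card_univ]
    field_simp
  have hS2 : S * S = S := by
    ext p q
    simp only [hSdef, meState, Matrix.mul_apply, Matrix.vecMulVec_apply, Pi.star_apply]
    have : ∀ r : Fin d × Fin d,
        ψ p * star (ψ r) * (ψ r * star (ψ q)) = (star (ψ r) * ψ r) * (ψ p * star (ψ q)) := by
      intro r; ring
    simp_rw [← hψdef, this]
    rw [← Finset.sum_mul, hsum, one_mul]
  have hSH : Sᴴ = S := by
    ext p q
    simp only [hSdef, meState, Matrix.conjTranspose_apply, Matrix.vecMulVec_apply, Pi.star_apply,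
      star_mul', star_star]
    ring
  have hStr : S.trace = 1 := by
    simp only [hSdef, meState, Matrix.trace, Matrix.diag, Matrix.vecMulVec_apply, Pi.star_apply]
    rw [← hsum]
    exact Finset.sum_congr rfl fun p _ => mul_comm _ _
  -- the convex combination
  have hlin : ε • A + (1 - ε) • B = S := by
    rw [← hΦ, hAdef, hBdef]
    ext p q
    simp only [ampId, Matrix.of_apply, Matrix.add_apply, Matrix.smul_apply, LinearMap.comp_apply,
      LinearMap.add_apply, LinearMap.smul_apply, map_add, LinearMap.map_smul_of_tower]
  -- conjugate by Q := 1 - S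
  set Q := (1 : Matrix (Fin d × Fin d) (Fin d × Fin d) ℂ) - S with hQdef
  have hQS : Q * S = 0 := by rw [hQdef, sub_mul, one_mul, hS2, sub_self]
  have hSQ : S * Q = 0 := by rw [hQdef, mul_sub, mul_one, hS2, sub_self]
  have hQH : Qᴴ = Q := by rw [hQdef, Matrix.conjTranspose_sub, Matrix.conjTranspose_one, hSH]
  have hzero : ε • (Q * A * Q) + (1 - ε) • (Q * B * Q) = 0 := by
    have h := congrArg (fun M => Q * M * Q) hlin
    simp only [mul_add, add_mul, Matrix.mul_smul, Matrix.smul_mul] at h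
    rw [h, hQS, Matrix.zero_mul]
  have hQAQpos : (Q * A * Q).PosSemidef := by
    have := hPpos.conjTranspose_mul_mul_same Q
    rwa [hQH] at this
  have hQBQpos : (Q * B * Q).PosSemidef := by
    have := hΨpos.conjTranspose_mul_mul_same Q
    rwa [hQH] at this
  obtain ⟨hAt, hAz⟩ := psd_trace_aux hQAQpos
  obtain ⟨hBt, hBz⟩ := psd_trace_aux hQBQpos
  have htr0 : (ε:ℂ) * (Q * A * Q).trace + ((1 - ε : ℝ):ℂ) * (Q * B * Q).trace = 0 := by
    have h := congrArg Matrix.trace hzero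
    simpa [Matrix.trace_add, Matrix.trace_smul, Complex.real_smul] using h
  have hεC : (0:ℂ) ≤ (ε:ℂ) := by exact_mod_cast hε.1.le
  have hε1C : (0:ℂ) ≤ ((1 - ε : ℝ):ℂ) := by
    rw [Complex.zero_le_real]; linarith [hε.2]
  have h1 : (0:ℂ) ≤ (ε:ℂ) * (Q * A * Q).trace := mul_nonneg hεC hAt
  have h2 : (0:ℂ) ≤ ((1 - ε : ℝ):ℂ) * (Q * B * Q).trace := mul_nonneg hε1C hBt
  have hx0 : (Q * A * Q).trace = 0 := by
    have hprod : (ε:ℂ) * (Q * A * Q).trace = 0 :=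
      ((add_eq_zero_iff_of_nonneg h1 h2).mp htr0).1
    have hεne : (ε:ℂ) ≠ 0 := by exact_mod_cast hε.1.ne'
    exact (mul_eq_zero.mp hprod).resolve_left hεne
  have hQAQ : Q * A * Q = 0 := hAz hx0
  -- deduce A * Q = 0 and Q * A = 0
  open scoped MatrixOrder in
  have hMH : (CFC.sqrt A)ᴴ = CFC.sqrt A := (CFC.sqrt_nonneg A).posSemidef.isHermitian
  open scoped MatrixOrder in
  have hMQ : CFC.sqrt A * Q = 0 := by
    rw [← Matrix.conjTranspose_mul_self_eq_zero (A := CFC.sqrt A * Q)]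
    rw [Matrix.conjTranspose_mul, hQH, hMH]
    calc Q * CFC.sqrt A * (CFC.sqrt A * Q)
        = Q * (CFC.sqrt A * CFC.sqrt A) * Q := by simp only [mul_assoc]
      _ = Q * A * Q := by rw [CFC.sqrt_mul_sqrt_self A hPpos.nonneg]
      _ = 0 := hQAQ
  open scoped MatrixOrder in
  have hAQ : A * Q = 0 := by
    calc A * Q = CFC.sqrt A * (CFC.sqrt A * Q) := by
          rw [← mul_assoc, CFC.sqrt_mul_sqrt_self A hPpos.nonneg]
      _ = 0 := by rw [hMQ, Matrix.mul_zero]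
  have hQA : Q * A = 0 := by
    have : (A * Q)ᴴ = Q * A := by rw [Matrix.conjTranspose_mul, hQH, hPpos.isHermitian.eq]
    rw [← this, hAQ, Matrix.conjTranspose_zero]
  -- hence A = S * A * S
  have hSplusQ : S + Q = 1 := by rw [hQdef]; abel
  have hA_SAS : A = S * A * S := by
    have hexp : (S + Q) * A * (S + Q) = S * A * S := by
      rw [add_mul, hQA, add_zero, mul_add, mul_assoc S A Q, hAQ, Matrix.mul_zero, add_zero]
    calc A = 1 * A * 1 := by rw [one_mul, mul_one]
      _ = (S + Q) * A * (S + Q) := by rw [hSplusQ]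
      _ = S * A * S := hexp
  -- compute S * A * S = c • S
  set c := ∑ r : Fin d × Fin d, ∑ s : Fin d × Fin d, star (ψ r) * A r s * ψ s with hcdef
  have hSAS : S * A * S = c • S := by
    ext p q
    simp only [hSdef, meState, Matrix.mul_apply, Matrix.vecMulVec_apply, Pi.star_apply,
      Matrix.smul_apply, smul_eq_mul]
    simp_rw [Finset.sum_mul, hcdef]
    rw [Finset.sum_comm]
    rw [Finset.sum_mul]
    refine Finset.sum_congr rfl fun r _ => ?_
    rw [Finset.sum_mul]
    refine Finset.sum_congr rfl fun s _ => ?_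
    ring
  have hAcS : A = c • S := hA_SAS.trans hSAS
  have hc1 : c = 1 := by
    have := hPtr
    rw [hAcS, Matrix.trace_smul, hStr, smul_eq_mul, mul_one] at this
    exact this
  rw [hAcS, hc1, one_smul]
end
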